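/- Let A be an n×m real matrix with no zero rows and no zero columns, let k : Fin n → ℕ₊ and l : Fin m → ℕ₊, and let A' be the split matrix of A with multiplicities k and l (rows indexed by (i,s), s ∈ Fin k_i, columns by (j,t), t ∈ Fin l_j, entry a_{ij}/(k_i·l_j)). Let Ã be the n×m matrix with entries ã_{ij} = a_{ij}/(√(k_i)·√(l_j)). Then ‖A'‖ = ‖Ã‖, where ‖·‖ is the ℓ²→ℓ² operator norm; consequently √(n'·m')·‖A'‖ = ‖Ã‖·‖w‖·‖v‖, where n' = Σᵢ k_i, m' = Σⱼ l_j, w ∈ ℝⁿ has w_i = √(k_i), and v ∈ ℝ^m has v_j = √(l_j). -/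

import Mathlib

open scoped BigOperators

/-- The ℓ²→ℓ² operator norm of a real matrix. -/
noncomputable def l2OpNorm {α β : Type*} [Fintype α] [Fintype β] [DecidableEq β]
    (A : Matrix α β ℝ) : ℝ :=
  ‖LinearMap.toContinuousLinearMap (Matrix.toEuclideanLin A)‖

/-- The ∞→1 norm of a real matrix: `max_{x ∈ {-1,1}ⁿ, y ∈ {-1,1}^m} xᵀ A y`. -/
noncomputable def normInftyOne {α β : Type*} [Fintype α] [Fintype β] (A : Matrix α β ℝ) : ℝ :=
  ⨆ p : (α → Bool) × (β → Bool),
    ∑ i, ∑ j, (if p.1 i then (1:ℝ) else -1) * A i j * (if p.2 j then (1:ℝ) else -1)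

/-- The Grothendieck norm: sup over `k` and families of unit vectors of `Σ a_{ij} ⟨p_i, q_j⟩`. -/
noncomputable def grothendieckNorm {α β : Type*} [Fintype α] [Fintype β]
    (A : Matrix α β ℝ) : ℝ :=
  sSup { r : ℝ | ∃ (k : ℕ) (p : α → EuclideanSpace ℝ (Fin k)) (q : β → EuclideanSpace ℝ (Fin k)),
    (∀ i, ‖p i‖ = 1) ∧ (∀ j, ‖q j‖ = 1) ∧
    r = ∑ i, ∑ j, A i j * (inner ℝ (p i) (q j) : ℝ) }

/-- The matrix obtained from `A` by splitting row `i` into `k i` equal rows and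
column `j` into `l j` equal columns. -/
noncomputable def splitMatrix {n m : ℕ} (A : Matrix (Fin n) (Fin m) ℝ)
    (k : Fin n → ℕ+) (l : Fin m → ℕ+) :
    Matrix ((i : Fin n) × Fin (k i : ℕ)) ((j : Fin m) × Fin (l j : ℕ)) ℝ :=
  fun p q => A p.1 q.1 / (((k p.1 : ℕ) : ℝ) * ((l q.1 : ℕ) : ℝ))

/-! Let `P` be the `(Σᵢ kᵢ) × n` matrix whose column `i` carries `1/√kᵢ` on the `kᵢ` copies of
row `i`, and `Q` the analogous matrix for `l`. Then `A' = P Ã Qᵀ`, and `Pᵀ P = 1`, `Qᵀ Q = 1`: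
the columns are orthonormal, so multiplying by `P` on the left or by `Qᵀ` on the right preserves
the ℓ² operator norm. The second identity is then `‖w‖² = Σᵢ kᵢ`, `‖v‖² = Σⱼ lⱼ`. -/

open scoped Matrix Matrix.Norms.L2Operator

namespace Matrix

section Isometry

variable {𝕜 : Type*} [RCLike 𝕜] {m n p : Type*} [Fintype m] [Fintype n] [Fintype p]
  [DecidableEq n]

lemma l2_opNorm_one_le : ‖(1 : Matrix n n 𝕜)‖ ≤ 1 := by
  rw [← diagonal_one, l2_opNorm_diagonal]
  simpa using pi_norm_const_le (ι := n) (1 : 𝕜)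

lemma l2_opNorm_le_one_of_conjTranspose_mul_self_eq_one {M : Matrix m n 𝕜} (hM : Mᴴ * M = 1) :
    ‖M‖ ≤ 1 := by
  have hsq : ‖M‖ * ‖M‖ ≤ 1 := by
    rw [← l2_opNorm_conjTranspose_mul_self, hM]
    exact l2_opNorm_one_le
  nlinarith [norm_nonneg M]

lemma l2_opNorm_mul_of_conjTranspose_mul_self_eq_one [DecidableEq m] [DecidableEq p]
    {M : Matrix m n 𝕜} (hM : Mᴴ * M = 1) (X : Matrix n p 𝕜) : ‖M * X‖ = ‖X‖ := by
  have hM₁ := l2_opNorm_le_one_of_conjTranspose_mul_self_eq_one hM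
  refine le_antisymm ?_ ?_
  · calc ‖M * X‖ ≤ ‖M‖ * ‖X‖ := l2_opNorm_mul M X
      _ ≤ ‖X‖ := mul_le_of_le_one_left (norm_nonneg X) hM₁
  · calc ‖X‖ = ‖Mᴴ * (M * X)‖ := by rw [← Matrix.mul_assoc, hM, Matrix.one_mul]
      _ ≤ ‖Mᴴ‖ * ‖M * X‖ := l2_opNorm_mul _ _
      _ ≤ ‖M * X‖ := by
        rw [l2_opNorm_conjTranspose]
        exact mul_le_of_le_one_left (norm_nonneg _) hM₁

lemma l2_opNorm_mul_conjTranspose_of_conjTranspose_mul_self_eq_one [DecidableEq m] [DecidableEq p]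
    {M : Matrix m n 𝕜} (hM : Mᴴ * M = 1) (X : Matrix p n 𝕜) : ‖X * Mᴴ‖ = ‖X‖ := by
  rw [← l2_opNorm_conjTranspose, conjTranspose_mul, conjTranspose_conjTranspose,
    l2_opNorm_mul_of_conjTranspose_mul_self_eq_one hM, l2_opNorm_conjTranspose]

end Isometry

end Matrix

section Split

variable {ι : Type*} [Fintype ι] [DecidableEq ι]

noncomputable def splitIsometry (k : ι → ℕ+) : Matrix ((i : ι) × Fin (k i : ℕ)) ι ℝ :=
  Matrix.of fun p i => if p.1 = i then (Real.sqrt ((k i : ℕ) : ℝ))⁻¹ else 0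

lemma splitIsometry_conjTranspose_mul_self (k : ι → ℕ+) :
    (splitIsometry k)ᴴ * splitIsometry k = 1 := by
  ext i i'
  simp only [Matrix.mul_apply, Matrix.conjTranspose_apply, star_trivial, splitIsometry,
    Matrix.of_apply, Fintype.sum_sigma, Matrix.one_apply]
  rw [Fintype.sum_eq_single i fun x hx => by simp [hx]]
  simp only [↓reduceIte]
  split_ifs with h
  · subst h
    have hk : (0 : ℝ) < ((k i : ℕ) : ℝ) := by exact_mod_cast (k i).pos
    rw [Finset.sum_const, Finset.card_univ, Fintype.card_fin, nsmul_eq_mul, ← mul_inv,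
      Real.mul_self_sqrt hk.le, mul_inv_cancel₀ hk.ne']
  · simp

end Split

lemma splitMatrix_eq_splitIsometry_mul {n m : ℕ} (A : Matrix (Fin n) (Fin m) ℝ)
    (k : Fin n → ℕ+) (l : Fin m → ℕ+) :
    splitMatrix A k l = splitIsometry k *
      Matrix.of (fun i j => A i j / (Real.sqrt ((k i : ℕ) : ℝ) * Real.sqrt ((l j : ℕ) : ℝ))) *
      (splitIsometry l)ᴴ := by
  ext ⟨i, s⟩ ⟨j, t⟩
  simp only [splitMatrix, splitIsometry, Matrix.mul_apply, Matrix.conjTranspose_apply,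
    Matrix.of_apply, star_trivial, ite_mul, zero_mul, mul_ite, mul_zero, Finset.sum_ite_eq,
    Finset.mem_univ, if_true]
  conv_lhs => rw [← Real.mul_self_sqrt (Nat.cast_nonneg (k i : ℕ)),
    ← Real.mul_self_sqrt (Nat.cast_nonneg (l j : ℕ))]
  ring

theorem l2OpNorm_splitMatrix (n m : ℕ) (A : Matrix (Fin n) (Fin m) ℝ)
    (k : Fin n → ℕ+) (l : Fin m → ℕ+)
    (Atil : Matrix (Fin n) (Fin m) ℝ)
    (hAtil : ∀ i j, Atil i j = A i j / (Real.sqrt ((k i : ℕ) : ℝ) * Real.sqrt ((l j : ℕ) : ℝ)))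
    (w : Fin n → ℝ) (hw : ∀ i, w i = Real.sqrt ((k i : ℕ) : ℝ))
    (v : Fin m → ℝ) (hv : ∀ j, v j = Real.sqrt ((l j : ℕ) : ℝ)) :
    l2OpNorm (splitMatrix A k l) = l2OpNorm Atil ∧
    Real.sqrt ((∑ i, ((k i : ℕ) : ℝ)) * (∑ j, ((l j : ℕ) : ℝ))) * l2OpNorm (splitMatrix A k l)
      = l2OpNorm Atil * Real.sqrt (∑ i, w i ^ 2) * Real.sqrt (∑ j, v j ^ 2) := by
  have hnorm : l2OpNorm (splitMatrix A k l) = l2OpNorm Atil := by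
    change ‖splitMatrix A k l‖ = ‖Atil‖
    rw [splitMatrix_eq_splitIsometry_mul, ← Matrix.ext hAtil,
      Matrix.l2_opNorm_mul_conjTranspose_of_conjTranspose_mul_self_eq_one
        (splitIsometry_conjTranspose_mul_self l),
      Matrix.l2_opNorm_mul_of_conjTranspose_mul_self_eq_one
        (splitIsometry_conjTranspose_mul_self k)]
    rfl
  have hw2 : ∑ i, w i ^ 2 = ∑ i, ((k i : ℕ) : ℝ) := by simp [hw]
  have hv2 : ∑ j, v j ^ 2 = ∑ j, ((l j : ℕ) : ℝ) := by simp [hv]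
  refine ⟨hnorm, ?_⟩
  rw [hnorm, hw2, hv2, Real.sqrt_mul (Finset.sum_nonneg fun i _ => Nat.cast_nonneg _)]
  ring
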